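/- Let k ≥ 1 and let ζ ∈ ℂ, ζ ≠ 0, be such that ζ is not a root of unity (ζ^m ≠ 1 for every m ≥ 1). Then the ℂ-dimension of the centralizer subalgebra {X : Matrix I_k I_k ℂ | X·D(k,ζ) = D(k,ζ)·X and X·P_k = P_k·X} equals the binomial coefficient C(2k − 1, k), i.e. half of C(2k, k). -/

import Mathlib

open Matrix

/-- The number of `-1` factors (encoded as `true`) in a simple tensor index. -/
def wt {k : ℕ} (r : Fin k → Bool) : ℕ := (Finset.univ.filter fun i => r i = true).card

/-- The sign-reversal `-r` of an index, `(−r) i = ¬ (r i)`. -/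
def negt {k : ℕ} (r : Fin k → Bool) : Fin k → Bool := fun i => !(r i)

/-- The matrix of `g^{⊗k}` on `V^{⊗k}` for `g = diag(ζ⁻¹, ζ)`. -/
noncomputable def Dmat (k : ℕ) (ζ : ℂ) : Matrix (Fin k → Bool) (Fin k → Bool) ℂ :=
  Matrix.diagonal fun r => ζ ^ ((k : ℤ) - 2 * (wt r : ℤ))

/-- The 0–1 matrix with `P r s = 1` iff `s = −r`. -/
noncomputable def Pmat (k : ℕ) : Matrix (Fin k → Bool) (Fin k → Bool) ℂ :=
  Matrix.of fun r s => if s = negt r then 1 else 0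

/-- The centralizer of a matrix `M`, as a submodule of the matrix algebra. -/
noncomputable def commSub {I : Type*} [Fintype I] [DecidableEq I] (M : Matrix I I ℂ) :
    Submodule ℂ (Matrix I I ℂ) where
  carrier := {X | X * M = M * X}
  add_mem' := by
    intro a b ha hb
    simp only [Set.mem_setOf_eq] at *
    rw [add_mul, mul_add, ha, hb]
  zero_mem' := by simp
  smul_mem' := by
    intro c X hX
    simp only [Set.mem_setOf_eq] at *
    rw [smul_mul_assoc, mul_smul_comm, hX]

/-! The diagonal entries `ζ ^ (k - 2 * wt r)` of `D(k,ζ)` separate weights because `ζ` is not a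
root of unity, so the centralizer of `D(k,ζ)` consists of the matrices supported on pairs `(r, s)`
with `wt r = wt s`; commuting with the permutation matrix `P_k` means invariance under
`(r, s) ↦ (−r, −s)`. This involution preserves weights and is free (it flips the first coordinate
of `r`), so the dimension is half the number of equal-weight pairs:
`½ ∑_w C(k,w)² = ½ C(2k,k) = C(2k−1,k)`. -/

open Finset

section Centralizer

variable {I : Type*} [Fintype I] [DecidableEq I]

theorem mem_commSub_diagonal_iff (d : I → ℂ) (X : Matrix I I ℂ) :
    X ∈ commSub (diagonal d) ↔ ∀ r s, d r ≠ d s → X r s = 0 := by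
  change X * diagonal d = diagonal d * X ↔ _
  simp only [← Matrix.ext_iff, mul_diagonal, diagonal_mul]
  refine forall₂_congr fun r s => ⟨fun h hne => ?_, fun h => ?_⟩
  · have : X r s * (d s - d r) = 0 := by linear_combination h
    exact (mul_eq_zero.1 this).resolve_right (sub_ne_zero.2 (Ne.symm hne))
  · by_cases hrs : d r = d s
    · rw [hrs, mul_comm]
    · simp [h hrs]

theorem mem_commSub_permMatrix_iff (σ : Equiv.Perm I) (X : Matrix I I ℂ) :
    X ∈ commSub σ.toPEquiv.toMatrix ↔ ∀ r s, X (σ r) (σ s) = X r s := by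
  change X * _ = _ * X ↔ _
  rw [PEquiv.mul_toMatrix_toPEquiv, PEquiv.toMatrix_toPEquiv_mul, ← Matrix.ext_iff]
  simp only [submatrix_apply, id]
  exact ⟨fun h r s => by simpa using (h r (σ s)).symm,
    fun h r s => by simpa using (h r (σ.symm s)).symm⟩

variable {d : I → ℂ} {σ : Equiv.Perm I} {p : I → Prop}

theorem eq_of_mem_commSub_diagonal_inf_permMatrix
    (hd : ∀ r s, d r = d s → d (σ r) = d (σ s)) (hp : ∀ r, p (σ r) ↔ ¬ p r) {X Y : Matrix I I ℂ}
    (hX : X ∈ commSub (diagonal d) ⊓ commSub σ.toPEquiv.toMatrix)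
    (hY : Y ∈ commSub (diagonal d) ⊓ commSub σ.toPEquiv.toMatrix)
    (h : ∀ r s, d r = d s → p r → X r s = Y r s) : X = Y := by
  rw [Submodule.mem_inf, mem_commSub_diagonal_iff, mem_commSub_permMatrix_iff] at hX hY
  ext r s
  by_cases hrs : d r = d s
  · by_cases hr : p r
    · exact h r s hrs hr
    · rw [← hX.2 r s, ← hY.2 r s]
      exact h _ _ (hd r s hrs) ((hp r).2 hr)
  · rw [hX.1 r s hrs, hY.1 r s hrs]

theorem finrank_commSub_diagonal_inf_permMatrix [DecidablePred p] (hσ : Function.Involutive σ)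
    (hd : ∀ r s, d r = d s → d (σ r) = d (σ s)) (hp : ∀ r, p (σ r) ↔ ¬ p r) :
    Module.finrank ℂ ↥(commSub (diagonal d) ⊓ commSub σ.toPEquiv.toMatrix) =
      Fintype.card {x : I × I // d x.1 = d x.2 ∧ p x.1} := by
  let restrict : ↥(commSub (diagonal d) ⊓ commSub σ.toPEquiv.toMatrix) →ₗ[ℂ]
      ({x : I × I // d x.1 = d x.2 ∧ p x.1} → ℂ) :=
    { toFun := fun X x => X.1 x.1.1 x.1.2
      map_add' := fun _ _ => rfl
      map_smul' := fun _ _ => rfl }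
  have hinj : Function.Injective restrict := fun X Y hXY => Subtype.ext <|
    eq_of_mem_commSub_diagonal_inf_permMatrix hd hp X.2 Y.2 fun r s hrs hr =>
      congrFun hXY ⟨(r, s), hrs, hr⟩
  have hsurj : Function.Surjective restrict := by
    intro f
    -- Extend `f` from the fundamental domain `p r` of `σ × σ` to a `σ`-invariant matrix.
    let X : Matrix I I ℂ := Matrix.of fun r s =>
      if hrs : d r = d s then
        if hr : p r then f ⟨(r, s), hrs, hr⟩ else f ⟨(σ r, σ s), hd r s hrs, (hp r).2 hr⟩
      else 0
    have hX : X ∈ commSub (diagonal d) ⊓ commSub σ.toPEquiv.toMatrix := by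
      rw [Submodule.mem_inf, mem_commSub_diagonal_iff, mem_commSub_permMatrix_iff]
      refine ⟨fun r s hrs => by simp [X, hrs], fun r s => ?_⟩
      have hσd : d (σ r) = d (σ s) ↔ d r = d s :=
        ⟨fun h => by simpa only [hσ r, hσ s] using hd _ _ h, hd r s⟩
      by_cases hrs : d r = d s
      · by_cases hr : p r
        · have hσr : ¬ p (σ r) := (not_congr (hp r)).2 (not_not.2 hr)
          simp [X, hrs, hr, hσr, hσ r, hσ s, hd r s hrs]
        · simp [X, hrs, hr, (hp r).2 hr, hd r s hrs]
      · simp [X, hrs, hσd]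
    refine ⟨⟨X, hX⟩, funext fun ⟨⟨r, s⟩, hrs, hr⟩ => ?_⟩
    change X r s = _
    simp only [X, of_apply, dif_pos hrs, dif_pos hr]
  rw [(LinearEquiv.ofBijective restrict ⟨hinj, hsurj⟩).finrank_eq,
    Module.finrank_fintype_fun_eq_card]

end Centralizer

theorem two_mul_card_subtype_and {α : Type*} [Fintype α] {q p : α → Prop} [DecidablePred q]
    [DecidablePred p] {τ : α → α} (hτ : Function.Involutive τ) (hq : ∀ x, q (τ x) ↔ q x)
    (hp : ∀ x, p (τ x) ↔ ¬ p x) :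
    2 * Fintype.card {x // q x ∧ p x} = Fintype.card {x // q x} := by
  have hswap : Fintype.card {x // q x ∧ p x} = Fintype.card {x // q x ∧ ¬ p x} :=
    Fintype.card_congr <| (hτ.toPerm τ).subtypeEquiv fun x => by simp [hq, hp]
  rw [two_mul]
  nth_rw 2 [hswap]
  simp only [Fintype.card_subtype, ← filter_filter, card_filter_add_card_filter_not]

section Weights

variable {k : ℕ}

theorem negt_involutive : Function.Involutive (negt (k := k)) := fun r => by
  funext i; simp [negt]

theorem wt_le (r : Fin k → Bool) : wt r ≤ k := by
  simpa [wt] using card_filter_le univ fun i => r i = true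

theorem wt_negt (r : Fin k → Bool) : wt (negt r) = k - wt r := by
  have h := card_filter_add_card_filter_not (s := univ) fun i => r i = true
  simp only [card_univ, Fintype.card_fin] at h
  simp only [wt, negt, Bool.not_eq_true', ← h]
  simp

theorem wt_negt_eq_wt_negt_iff {r s : Fin k → Bool} :
    wt (negt r) = wt (negt s) ↔ wt r = wt s := by
  rw [wt_negt, wt_negt]
  have := wt_le r
  have := wt_le s
  omega

def negtPerm (k : ℕ) : Equiv.Perm (Fin k → Bool) := negt_involutive.toPerm negt

theorem Pmat_eq_toMatrix : Pmat k = (negtPerm k).toPEquiv.toMatrix := by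
  ext r s
  simp [Pmat, negtPerm, PEquiv.toMatrix_apply, eq_comm]

end Weights

theorem zpow_injective_of_not_isOfFinOrder {G₀ : Type*} [GroupWithZero G₀] {a : G₀} (ha₀ : a ≠ 0)
    (ha : ¬ IsOfFinOrder a) : Function.Injective (a ^ · : ℤ → G₀) := by
  rw [← Units.val_mk0 ha₀, Units.isOfFinOrder_val, ← injective_zpow_iff_not_isOfFinOrder] at ha
  intro m n h
  exact ha (Units.ext (by simpa [Units.val_zpow_eq_zpow_val] using h))

def trueSetEquiv (ι : Type*) [Fintype ι] [DecidableEq ι] : (ι → Bool) ≃ Finset ι where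
  toFun r := univ.filter fun i => r i = true
  invFun s i := decide (i ∈ s)
  left_inv r := by funext i; simp
  right_inv s := by ext i; simp

theorem card_wt_eq (k w : ℕ) : Fintype.card {r : Fin k → Bool // wt r = w} = k.choose w := by
  calc Fintype.card {r : Fin k → Bool // wt r = w}
      = Fintype.card {s : Finset (Fin k) // s.card = w} :=
        Fintype.card_congr ((trueSetEquiv (Fin k)).subtypeEquiv fun r => Iff.rfl)
    _ = k.choose w := by rw [Fintype.card_finset_len, Fintype.card_fin]

theorem card_wt_eq_wt (k : ℕ) :
    Fintype.card {x : (Fin k → Bool) × (Fin k → Bool) // wt x.1 = wt x.2} = (2 * k).choose k := by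
  have hmaps : ∀ r ∈ (univ : Finset (Fin k → Bool)), wt r ∈ range (k + 1) :=
    fun r _ => mem_range_succ_iff.2 (wt_le r)
  calc Fintype.card {x : (Fin k → Bool) × (Fin k → Bool) // wt x.1 = wt x.2}
      = ∑ r : Fin k → Bool, k.choose (wt r) := by
        rw [Fintype.card_congr (Equiv.subtypeProdEquivSigmaSubtype fun r s => wt r = wt s),
          Fintype.card_sigma]
        simp_rw [← card_wt_eq, eq_comm]
    _ = ∑ w ∈ range (k + 1), k.choose w ^ 2 := by
        rw [← sum_fiberwise_of_maps_to hmaps]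
        refine sum_congr rfl fun w _ => ?_
        rw [sum_congr rfl fun r hr => by rw [(mem_filter.1 hr).2], sum_const, smul_eq_mul, sq,
          ← card_wt_eq k w, Fintype.card_subtype]
    _ = (2 * k).choose k := Nat.sum_range_choose_sq k

theorem two_mul_choose_two_mul_sub_one {k : ℕ} (hk : 1 ≤ k) :
    2 * (2 * k - 1).choose k = (2 * k).choose k := by
  obtain ⟨m, rfl⟩ := Nat.exists_eq_add_of_le' hk
  rw [show 2 * (m + 1) - 1 = 2 * m + 1 by omega, show 2 * (m + 1) = 2 * m + 1 + 1 by ring,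
    Nat.choose_succ_succ (2 * m + 1), Nat.choose_symm_half]
  ring

/-- For `ζ` not a root of unity, the centralizer algebra `Z_k(D_∞)` of
`{D(k,ζ), P_k}` has dimension `C(2k−1, k)`. -/
theorem stmt11 (k : ℕ) (hk : 1 ≤ k) (ζ : ℂ) (hζ0 : ζ ≠ 0)
    (hζ : ∀ m : ℕ, 1 ≤ m → ζ ^ m ≠ 1) :
    Module.finrank ℂ ↥(commSub (Dmat k ζ) ⊓ commSub (Pmat k)) =
      (2 * k - 1).choose k := by
  have hζord : ¬ IsOfFinOrder ζ := fun h =>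
    let ⟨m, hm, hζm⟩ := isOfFinOrder_iff_pow_eq_one.1 h
    hζ m hm hζm
  have hd (r s : Fin k → Bool) :
      ζ ^ ((k : ℤ) - 2 * wt r) = ζ ^ ((k : ℤ) - 2 * wt s) ↔ wt r = wt s :=
    (zpow_injective_of_not_isOfFinOrder hζ0 hζord).eq_iff.trans (by omega)
  let i₀ : Fin k := ⟨0, hk⟩
  have hflip (r : Fin k → Bool) : negt r i₀ = false ↔ ¬ r i₀ = false := by simp [negt]
  rw [Dmat, Pmat_eq_toMatrix, finrank_commSub_diagonal_inf_permMatrix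
    (p := fun r => r i₀ = false) (σ := negtPerm k) negt_involutive
    (fun r s h => (hd _ _).2 (wt_negt_eq_wt_negt_iff.2 ((hd r s).1 h))) hflip]
  apply Nat.eq_of_mul_eq_mul_left two_pos
  rw [two_mul_choose_two_mul_sub_one hk, ← card_wt_eq_wt,
    Fintype.card_congr (Equiv.subtypeEquivRight fun x => by rw [hd x.1 x.2] :
      {x : (Fin k → Bool) × (Fin k → Bool) // _ ∧ x.1 i₀ = false} ≃
        {x : (Fin k → Bool) × (Fin k → Bool) // wt x.1 = wt x.2 ∧ x.1 i₀ = false})]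
  exact two_mul_card_subtype_and (negt_involutive.prodMap negt_involutive)
    (fun _ => wt_negt_eq_wt_negt_iff) (fun x => hflip x.1)
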